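/- arXiv:2502.15621 — 3 statements merged into one kernel-verified Lean document; each statement's English description precedes it below -/
import Mathlib

section
/- Let (T,⊗) be an M-compatible tensor triangulated category and let L be a ⊗-ample object of T. Then a thick subcategory P of T is a prime ⊗-ideal if and only if P is a prime thick subcategory satisfying τ_L⁻¹(P) = P. In other words, the Balmer spectrum Spc_⊗(T) (the set of prime ⊗-ideals) coincides with the set Spc^{τ_L}(T) of prime thick subcategories fixed by the autoequivalence τ_L, inside the set of all prime thick subcategories. -/
open CategoryTheory Limits Pretriangulated MonoidalCategory

universe v u

namespace PaperTT

variable (C : Type u) [Category.{v} C] [HasZeroObject C] [HasShift C ℤ]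
  [Preadditive C] [∀ n : ℤ, (shiftFunctor C n).Additive] [Pretriangulated C]

/-- A thick subcategory of a (pre)triangulated category, encoded as the set of its objects:
it contains the zero objects, is closed under isomorphisms, shifts, extensions
(two-out-of-three for distinguished triangles) and direct summands (retracts). -/
def IsThickSubcategory (S : Set C) : Prop :=
  (∀ Z : C, IsZero Z → Z ∈ S) ∧
  (∀ ⦃X Y : C⦄, (X ≅ Y) → X ∈ S → Y ∈ S) ∧
  (∀ (X : C) (n : ℤ), X ∈ S → (shiftFunctor C n).obj X ∈ S) ∧
  (∀ T ∈ distTriang C, T.obj₁ ∈ S → T.obj₃ ∈ S → T.obj₂ ∈ S) ∧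
  (∀ (X Y : C) (i : X ⟶ Y) (r : Y ⟶ X), i ≫ r = 𝟙 X → Y ∈ S → X ∈ S)

/-- A prime thick subcategory: a thick subcategory `S` such that the poset of thick
subcategories strictly containing `S` has a smallest element. -/
def IsPrimeThickSubcategory (S : Set C) : Prop :=
  IsThickSubcategory C S ∧
    ∃ Q : Set C, IsThickSubcategory C Q ∧ S ⊂ Q ∧
      ∀ R : Set C, IsThickSubcategory C R → S ⊂ R → Q ⊆ R

variable [MonoidalCategory C]

/-- The ⊗-ideal condition for a subcategory: `M ⊗ N ∈ S` for all `M` and all `N ∈ S`. -/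
def IsTensorIdealSet (S : Set C) : Prop :=
  ∀ (M N : C), N ∈ S → M ⊗ N ∈ S

/-- A thick ⊗-ideal. -/
def IsTensorIdeal (S : Set C) : Prop :=
  IsThickSubcategory C S ∧ IsTensorIdealSet C S

/-- A prime ⊗-ideal: a proper thick ⊗-ideal `S` with `M ⊗ N ∈ S → M ∈ S ∨ N ∈ S`. -/
def IsPrimeTensorIdeal (S : Set C) : Prop :=
  IsTensorIdeal C S ∧ S ≠ Set.univ ∧ ∀ (M N : C), M ⊗ N ∈ S → M ∈ S ∨ N ∈ S

/-- `M`-compatibility: a thick subcategory is a prime ⊗-ideal iff it is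
a prime thick subcategory that is a ⊗-ideal. -/
def MCompatible : Prop :=
  ∀ S : Set C, IsPrimeTensorIdeal C S ↔
    (IsPrimeThickSubcategory C S ∧ IsTensorIdealSet C S)

/-- Nonnegative tensor powers of an object; `npow L 0 = 𝟙_ C`. -/
def npow (L : C) : ℕ → C
  | 0 => 𝟙_ C
  | n + 1 => npow L n ⊗ L

/-- Integer tensor powers of an object `L`, the negative powers being the positive
powers of a chosen tensor inverse `L'` of `L`. -/
def zpow (L L' : C) : ℤ → C
  | Int.ofNat n => npow C L n
  | Int.negSucc n => npow C L' (n + 1)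



/-- The preimage of a thick subcategory under a triangulated functor is thick. -/
theorem isThickSubcategory_preimage
    {D : Type u} [Category.{v} D] [HasZeroObject D] [HasShift D ℤ]
    [Preadditive D] [∀ n : ℤ, (shiftFunctor D n).Additive] [Pretriangulated D]
    (F : D ⥤ D) [F.CommShift ℤ] [F.IsTriangulated]
    (P : Set D) (hP : IsThickSubcategory D P) :
    IsThickSubcategory D {M : D | F.obj M ∈ P} := by
  obtain ⟨h0, hiso, hsh, hext, hret⟩ := hP
  refine ⟨?_, ?_, ?_, ?_, ?_⟩
  · intro Z hZ
    exact h0 _ (F.map_isZero hZ)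
  · intro X Y e hX
    exact hiso (F.mapIso e) hX
  · intro X n hX
    exact hiso ((F.commShiftIso n).app X).symm (hsh _ n hX)
  · intro T hT h1 h3
    exact hext (F.mapTriangle.obj T) (F.map_distinguished T hT) h1 h3
  · intro X Y i r hir hY
    exact hret (F.obj X) (F.obj Y) (F.map i) (F.map r)
      (by rw [← F.map_comp, hir, F.map_id]) hY

/-- Let `(C,⊗)` be an `M`-compatible symmetric tensor triangulated category
(the tensor product being triangulated in each variable) and let `L` be a ⊗-ample object,
with chosen tensor inverse `L'`.  Then a thick subcategory `P` is a prime ⊗-ideal if and only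
if it is a prime thick subcategory fixed by the autoequivalence `τ_L = - ⊗ L`, i.e.
`τ_L⁻¹(P) = {M : M ⊗ L ∈ P} = P`. -/
theorem balmer_spectrum_eq_pt_spectrum_of_tensor_ample
    (C : Type u) [Category.{v} C] [HasZeroObject C] [HasShift C ℤ]
    [Preadditive C] [∀ n : ℤ, (shiftFunctor C n).Additive] [Pretriangulated C]
    [MonoidalCategory C] [SymmetricCategory C]
    [∀ N : C, (tensorLeft N).CommShift ℤ] [∀ N : C, (tensorLeft N).IsTriangulated]
    [∀ N : C, (tensorRight N).CommShift ℤ] [∀ N : C, (tensorRight N).IsTriangulated]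
    (hM : MCompatible C)
    (L L' : C) (e : L ⊗ L' ≅ 𝟙_ C)
    (hample : ∀ S : Set C, IsThickSubcategory C S →
      (∀ n : ℤ, zpow C L L' n ∈ S) → S = Set.univ)
    (P : Set C) :
    IsPrimeTensorIdeal C P ↔
      (IsPrimeThickSubcategory C P ∧ {M : C | M ⊗ L ∈ P} = P) := by
  constructor
  · -- Forward: a prime ⊗-ideal is a prime thick subcategory fixed by τ_L.
    intro hPT
    obtain ⟨hprime, hideal⟩ := (hM P).mp hPT
    obtain ⟨⟨hthick, -⟩, hne, hp⟩ := hPT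
    obtain ⟨h0, hiso, hsh, hext, hret⟩ := hthick
    refine ⟨hprime, ?_⟩
    ext M
    simp only [Set.mem_setOf_eq]
    constructor
    · intro hML
      rcases hp M L hML with h | hL
      · exact h
      · exfalso
        apply hne
        have h1 : (𝟙_ C) ∈ P := hiso ((β_ L' L) ≪≫ e) (hideal L' L hL)
        exact Set.eq_univ_iff_forall.mpr (fun M' => hiso (ρ_ M') (hideal M' (𝟙_ C) h1))
    · intro hMP
      exact hiso (β_ L M) (hideal L M hMP)
  · -- Backward: a prime thick subcategory fixed by τ_L is a prime ⊗-ideal.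
    rintro ⟨hprime, hfix⟩
    have hthick := hprime.1
    obtain ⟨h0, hiso, hsh, hext, hret⟩ := hprime.1
    have hfix' : ∀ M : C, M ⊗ L ∈ P ↔ M ∈ P := fun M => Set.ext_iff.mp hfix M
    have hA : ∀ N : C, N ∈ P → L ⊗ N ∈ P := fun N hN =>
      hiso (β_ N L) ((hfix' N).mpr hN)
    have hB : ∀ N : C, N ∈ P → L' ⊗ N ∈ P := by
      intro N hN
      have iso2 : (L' ⊗ N) ⊗ L ≅ N :=
        α_ L' N L ≪≫ whiskerLeftIso L' (β_ N L) ≪≫ (α_ L' L N).symm ≪≫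
          whiskerRightIso (β_ L' L) N ≪≫ whiskerRightIso e N ≪≫ λ_ N
      exact (hfix' (L' ⊗ N)).mp (hiso iso2.symm hN)
    have hnpowA : ∀ (k : ℕ) (N : C), N ∈ P → npow C L k ⊗ N ∈ P := by
      intro k
      induction k with
      | zero => intro N hN; exact hiso (λ_ N).symm hN
      | succ k ih =>
        intro N hN
        exact hiso (α_ (npow C L k) L N).symm (ih _ (hA N hN))
    have hnpowB : ∀ (k : ℕ) (N : C), N ∈ P → npow C L' k ⊗ N ∈ P := by
      intro k
      induction k with
      | zero => intro N hN; exact hiso (λ_ N).symm hN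
      | succ k ih =>
        intro N hN
        exact hiso (α_ (npow C L' k) L' N).symm (ih _ (hB N hN))
    have hideal : IsTensorIdealSet C P := by
      intro M N hN
      have hS : IsThickSubcategory C {X : C | X ⊗ N ∈ P} :=
        isThickSubcategory_preimage (tensorRight N) P hthick
      have huniv : {X : C | X ⊗ N ∈ P} = Set.univ := by
        apply hample _ hS
        intro n
        cases n with
        | ofNat k => exact hnpowA k N hN
        | negSucc k => exact hnpowB (k + 1) N hN
      exact Set.eq_univ_iff_forall.mp huniv M
    exact (hM P).mpr ⟨hprime, hideal⟩


end PaperTT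
end

section
/- Let (T,⊗) be an M-compatible tensor triangulated category and let (L_i)_{i∈I} be a family of ⊗-invertible objects of T such that the smallest thick subcategory containing all finite tensor products ⊗_{i} L_i^{⊗ d_i} (where d = (d_i) ranges over finitely supported integer tuples, negative powers meaning powers of the inverse) is T itself. Then a thick subcategory P of T is a prime ⊗-ideal if and only if P is a prime thick subcategory satisfying τ_{L_i}⁻¹(P) = P for every i ∈ I. -/
/-!
Every power `⊗ᵢ Lᵢ^{dᵢ}` absorbs a thick subcategory `P` fixed by all `τ_{Lᵢ}`, because `P` is
then stable under `- ⊗ Lᵢ` and `- ⊗ Lᵢ⁻¹`. For `N ∈ P` the objects `M` with `M ⊗ N ∈ P` form a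
thick subcategory containing all these powers, hence everything: `P` is a ⊗-ideal, and
`M`-compatibility turns "prime thick ⊗-ideal" into "prime ⊗-ideal". Conversely a ⊗-ideal is
stable under tensoring with any object, hence fixed by the invertible `τ_{Lᵢ}`.
-/

open CategoryTheory Limits Pretriangulated MonoidalCategory

universe v u

namespace PaperTT

variable (C : Type u) [Category.{v} C] [HasZeroObject C] [HasShift C ℤ]
  [Preadditive C] [∀ n : ℤ, (shiftFunctor C n).Additive] [Pretriangulated C]

variable [MonoidalCategory C]

/-- The finite tensor product `⊗_i L_i^{⊗ d_i}` attached to a finitely supported integer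
tuple `d : ι →₀ ℤ`, the negative powers of `L i` being the positive powers of its chosen
tensor inverse `L' i`; the product is taken over the support of `d` (in some order). -/
noncomputable def finsuppTensorProd {ι : Type*} (L L' : ι → C) (d : ι →₀ ℤ) : C :=
  (d.support.toList.map fun i => zpow C (L i) (L' i) (d i)).foldr (· ⊗ ·) (𝟙_ C)

end PaperTT

namespace PaperTT

section Thick

variable {C D : Type*} [Category C] [Category D]
  [HasZeroObject C] [HasShift C ℤ] [Preadditive C] [∀ n : ℤ, (shiftFunctor C n).Additive]
  [Pretriangulated C]
  [HasZeroObject D] [HasShift D ℤ] [Preadditive D] [∀ n : ℤ, (shiftFunctor D n).Additive]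
  [Pretriangulated D]

theorem IsThickSubcategory.preimage {S : Set D} (hS : IsThickSubcategory D S)
    (F : C ⥤ D) [F.CommShift ℤ] [F.IsTriangulated] :
    IsThickSubcategory C (F.obj ⁻¹' S) := by
  obtain ⟨hzero, hiso, hshift, hext, hretract⟩ := hS
  refine ⟨fun Z hZ => hzero _ (F.map_isZero hZ), fun X Y f hX => hiso (F.mapIso f) hX,
    fun X n hX => hiso ((F.commShiftIso n).app X).symm (hshift _ n hX),
    fun T hT h₁ h₃ => hext _ (F.map_distinguished T hT) h₁ h₃,
    fun X Y i r hir hY => hretract _ _ (F.map i) (F.map r) ?_ hY⟩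
  rw [← F.map_comp, hir, F.map_id]

end Thick

section Monoidal

variable {C : Type*} [Category C] [MonoidalCategory C]

def absorbers (P : Set C) : Set C := {A | ∀ N ∈ P, A ⊗ N ∈ P}

variable {P : Set C} (hiso : ∀ ⦃X Y : C⦄, (X ≅ Y) → X ∈ P → Y ∈ P)
include hiso

theorem unit_mem_absorbers : 𝟙_ C ∈ absorbers P :=
  fun N hN => hiso (λ_ N).symm hN

theorem tensor_mem_absorbers {A B : C} (hA : A ∈ absorbers P) (hB : B ∈ absorbers P) :
    A ⊗ B ∈ absorbers P :=
  fun N hN => hiso (α_ A B N).symm (hA _ (hB _ hN))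

theorem npow_mem_absorbers {A : C} (hA : A ∈ absorbers P) (n : ℕ) :
    npow C A n ∈ absorbers P := by
  induction n with
  | zero => exact unit_mem_absorbers hiso
  | succ n ih => exact tensor_mem_absorbers hiso ih hA

theorem zpow_mem_absorbers {A A' : C} (hA : A ∈ absorbers P) (hA' : A' ∈ absorbers P) :
    ∀ k : ℤ, zpow C A A' k ∈ absorbers P
  | Int.ofNat n => npow_mem_absorbers hiso hA n
  | Int.negSucc n => npow_mem_absorbers hiso hA' (n + 1)

theorem foldr_tensor_mem_absorbers :
    ∀ l : List C, (∀ A ∈ l, A ∈ absorbers P) → l.foldr (· ⊗ ·) (𝟙_ C) ∈ absorbers P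
  | [], _ => unit_mem_absorbers hiso
  | A :: l, hl => tensor_mem_absorbers hiso (hl A List.mem_cons_self)
      (foldr_tensor_mem_absorbers l fun B hB => hl B (List.mem_cons_of_mem A hB))

theorem finsuppTensorProd_mem_absorbers {ι : Type*} {L L' : ι → C}
    (hL : ∀ i, L i ∈ absorbers P) (hL' : ∀ i, L' i ∈ absorbers P) (d : ι →₀ ℤ) :
    finsuppTensorProd C L L' d ∈ absorbers P := by
  refine foldr_tensor_mem_absorbers hiso _ fun A hA => ?_
  obtain ⟨i, -, rfl⟩ := List.mem_map.mp hA
  exact zpow_mem_absorbers hiso (hL i) (hL' i) (d i)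

end Monoidal

section Braided

variable {C : Type*} [Category C] [MonoidalCategory C] [BraidedCategory C]

def tensorInvTensorIso {L L' : C} (e : L ⊗ L' ≅ 𝟙_ C) (M : C) : M ≅ (M ⊗ L') ⊗ L :=
  (ρ_ M).symm ≪≫ whiskerLeftIso M (e.symm ≪≫ β_ L L') ≪≫ (α_ M L' L).symm

variable {P : Set C} (hiso : ∀ ⦃X Y : C⦄, (X ≅ Y) → X ∈ P → Y ∈ P)
  {L L' : C} (e : L ⊗ L' ≅ 𝟙_ C)
include hiso

theorem mem_absorbers_of_setOf_tensor_mem_eq (hfix : {M | M ⊗ L ∈ P} = P) :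
    L ∈ absorbers P :=
  fun N hN => hiso (β_ N L) (hfix.ge hN)

include e

theorem setOf_tensor_mem_eq (hideal : IsTensorIdealSet C P) : {M | M ⊗ L ∈ P} = P := by
  ext M
  refine ⟨fun hML => ?_, fun hM => hiso (β_ L M) (hideal L M hM)⟩
  exact hiso ((β_ (M ⊗ L) L').symm ≪≫ α_ M L L' ≪≫ whiskerLeftIso M e ≪≫ ρ_ M)
    (hideal L' _ hML)

theorem setOf_tensor_inv_mem_eq (hfix : {M | M ⊗ L ∈ P} = P) : {M | M ⊗ L' ∈ P} = P := by
  ext M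
  exact ⟨fun hML' => hiso (tensorInvTensorIso e M).symm (hfix.ge hML'),
    fun hM => hfix.le (hiso (tensorInvTensorIso e M) hM)⟩

end Braided

section TensorTriangulated

variable {C : Type*} [Category C] [HasZeroObject C] [HasShift C ℤ] [Preadditive C]
  [∀ n : ℤ, (shiftFunctor C n).Additive] [Pretriangulated C] [MonoidalCategory C]
  [∀ N : C, (tensorRight N).CommShift ℤ] [∀ N : C, (tensorRight N).IsTriangulated]

theorem isTensorIdealSet_of_generators_mem_absorbers {κ : Type*} {G : κ → C}
    (hgen : ∀ S : Set C, IsThickSubcategory C S → (∀ k, G k ∈ S) → S = Set.univ)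
    {P : Set C} (hP : IsThickSubcategory C P) (hG : ∀ k, G k ∈ absorbers P) :
    IsTensorIdealSet C P := fun M N hN => by
  have h := hgen _ (hP.preimage (tensorRight N)) fun k => hG k N hN
  exact h.ge (Set.mem_univ M)

end TensorTriangulated

/-- Let `(C,⊗)` be an `M`-compatible symmetric tensor triangulated category
(the tensor product being triangulated in each variable) and let `(L i)` be a family of
⊗-invertible objects (with chosen inverses `L' i`) such that the smallest thick subcategory
containing all finite tensor products `⊗_i (L i)^(d i)`, for `d` a finitely supported integer
tuple, is all of `C`.  Then a thick subcategory `P` is a prime ⊗-ideal if and only if it is a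
prime thick subcategory fixed by every autoequivalence `τ_{L i} = - ⊗ L i`. -/
theorem balmer_spectrum_eq_pt_spectrum_of_multi_polarization
    (C : Type u) [Category.{v} C] [HasZeroObject C] [HasShift C ℤ]
    [Preadditive C] [∀ n : ℤ, (shiftFunctor C n).Additive] [Pretriangulated C]
    [MonoidalCategory C] [SymmetricCategory C]
    [∀ N : C, (tensorLeft N).CommShift ℤ] [∀ N : C, (tensorLeft N).IsTriangulated]
    [∀ N : C, (tensorRight N).CommShift ℤ] [∀ N : C, (tensorRight N).IsTriangulated]
    (hM : MCompatible C)
    {ι : Type*} (L L' : ι → C) (e : ∀ i, L i ⊗ L' i ≅ 𝟙_ C)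
    (hgen : ∀ S : Set C, IsThickSubcategory C S →
      (∀ d : ι →₀ ℤ, finsuppTensorProd C L L' d ∈ S) → S = Set.univ)
    (P : Set C) :
    IsPrimeTensorIdeal C P ↔
      (IsPrimeThickSubcategory C P ∧ ∀ i : ι, {M : C | M ⊗ L i ∈ P} = P) := by
  refine ⟨fun hP => ⟨((hM P).mp hP).1, fun i => setOf_tensor_mem_eq hP.1.1.2.1 (e i) hP.1.2⟩,
    fun ⟨hprime, hfix⟩ => (hM P).mpr ⟨hprime, ?_⟩⟩
  have hiso := hprime.1.2.1
  have hL' (i : ι) : {M | M ⊗ L' i ∈ P} = P := setOf_tensor_inv_mem_eq hiso (e i) (hfix i)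
  exact isTensorIdealSet_of_generators_mem_absorbers hgen hprime.1 <|
    finsuppTensorProd_mem_absorbers hiso
      (fun i => mem_absorbers_of_setOf_tensor_mem_eq hiso (hfix i))
      (fun i => mem_absorbers_of_setOf_tensor_mem_eq hiso (hL' i))

end PaperTT
end

section
/- Let (T,⊗) be a tensor triangulated category and let L be a ⊗-ample object of T. Then every thick subcategory P of T satisfying τ_L⁻¹(P) = P is a ⊗-ideal. -/
open CategoryTheory Limits Pretriangulated MonoidalCategory

universe v u

namespace PaperTT

variable (C : Type u) [Category.{v} C] [HasZeroObject C] [HasShift C ℤ]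
  [Preadditive C] [∀ n : ℤ, (shiftFunctor C n).Additive] [Pretriangulated C]

variable [MonoidalCategory C]

/-- Let `(C,⊗)` be a symmetric tensor triangulated category (the tensor
product being triangulated in each variable) and let `L` be a ⊗-ample object with chosen
tensor inverse `L'`.  Then every thick subcategory `P` fixed by `τ_L = - ⊗ L`
(that is, with `{M : M ⊗ L ∈ P} = P`) is a ⊗-ideal. -/
theorem isTensorIdeal_of_fixed_by_tensor_ample
    (C : Type u) [Category.{v} C] [HasZeroObject C] [HasShift C ℤ]
    [Preadditive C] [∀ n : ℤ, (shiftFunctor C n).Additive] [Pretriangulated C]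
    [MonoidalCategory C] [SymmetricCategory C]
    [∀ N : C, (tensorLeft N).CommShift ℤ] [∀ N : C, (tensorLeft N).IsTriangulated]
    [∀ N : C, (tensorRight N).CommShift ℤ] [∀ N : C, (tensorRight N).IsTriangulated]
    (L L' : C) (e : L ⊗ L' ≅ 𝟙_ C)
    (hample : ∀ S : Set C, IsThickSubcategory C S →
      (∀ n : ℤ, zpow C L L' n ∈ S) → S = Set.univ)
    (P : Set C) (hP : IsThickSubcategory C P)
    (hfix : {M : C | M ⊗ L ∈ P} = P) :
    IsTensorIdealSet C P := by
  intro M N hN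
  have h1 : ∀ X : C, X ⊗ L ∈ P ↔ X ∈ P := fun X => Set.ext_iff.mp hfix X
  have hiso := hP.2.1
  have hL : ∀ X ∈ P, X ⊗ L ∈ P := fun X hX => (h1 X).mpr hX
  have hL' : ∀ X ∈ P, X ⊗ L' ∈ P := by
    intro X hX
    apply (h1 _).mp
    have i : X ≅ (X ⊗ L') ⊗ L :=
      (ρ_ X).symm ≪≫ (whiskerLeftIso X e).symm ≪≫
        (whiskerLeftIso X (β_ L L')) ≪≫ (α_ X L' L).symm
    exact hiso i hX
  have hnpowL : ∀ k : ℕ, N ⊗ npow C L k ∈ P := by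
    intro k
    induction k with
    | zero => exact hiso (ρ_ N).symm hN
    | succ k ih =>
      exact hiso (α_ N (npow C L k) L) (hL _ ih)
  have hnpowL' : ∀ k : ℕ, N ⊗ npow C L' k ∈ P := by
    intro k
    induction k with
    | zero => exact hiso (ρ_ N).symm hN
    | succ k ih =>
      exact hiso (α_ N (npow C L' k) L') (hL' _ ih)
  have hzpow : ∀ n : ℤ, N ⊗ zpow C L L' n ∈ P := by
    intro n
    cases n with
    | ofNat k => exact hnpowL k
    | negSucc k => exact hnpowL' (k + 1)
  set F := tensorRight N with hF
  set S : Set C := {M | M ⊗ N ∈ P} with hS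
  have hSthick : IsThickSubcategory C S := by
    refine ⟨?_, ?_, ?_, ?_, ?_⟩
    · intro Z hZ
      have : IsZero (F.obj Z) := F.map_isZero hZ
      exact hP.1 _ this
    · intro X Y f hX
      exact hiso (F.mapIso f) hX
    · intro X n hX
      have i : F.obj ((shiftFunctor C n).obj X) ≅ (shiftFunctor C n).obj (F.obj X) :=
        (F.commShiftIso n).app X
      exact hiso i.symm (hP.2.2.1 _ n hX)
    · intro T hT h1' h3'
      exact hP.2.2.2.1 (F.mapTriangle.obj T) (F.map_distinguished T hT) h1' h3'
    · intro X Y i r hir hY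
      refine hP.2.2.2.2 _ _ (F.map i) (F.map r) ?_ hY
      rw [← F.map_comp, hir, F.map_id]; rfl
  have hSuniv : S = Set.univ := by
    apply hample S hSthick
    intro n
    exact hiso (β_ N (zpow C L L' n)) (hzpow n)
  have : M ∈ S := hSuniv ▸ Set.mem_univ M
  exact this


end PaperTT
end
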